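/- Let β > 0, C₀ ∈ ℝ and λ₀ ∈ (0, 1) with 2β + C₀λ₀ > 0, and define F : (0, λ₀] → ℝ by F(λ) = ∫_λ^{λ₀} τ^{−3/2} (2β + C₀τ)^{−1/2} dτ. Then F is continuous and strictly decreasing on (0, λ₀], F(λ₀) = 0, and F(λ) → +∞ as λ → 0⁺; consequently there exist constants C > 0 and S₀ > 0 such that for every s₁ ≥ S₀ there is a unique λ₁ ∈ (0, λ₀] with F(λ₁) = s₁, and this λ₁ satisfies |s₁·√(β·λ₁/2) − 1| ≤ C/s₁ (equivalently, |√(λ₁/λ_app(s₁)) − 1| ≤ C/s₁ where λ_app(s) = 2/(βs²)). -/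

import Mathlib

open Real MeasureTheory intervalIntegral Filter


lemma aux_pos {β C₀ lam₀ τ : ℝ} (hβ : 0 < β) (hlam₀ : 0 < lam₀)
    (hpos : 0 < 2 * β + C₀ * lam₀) (hτ : 0 < τ) (hτ' : τ ≤ lam₀) :
    0 < 2 * β + C₀ * τ := by
  nlinarith [mul_pos hτ hpos, mul_nonneg (by linarith : (0:ℝ) ≤ 2*β) (by linarith : (0:ℝ) ≤ lam₀ - τ)]

lemma F_formula (β C₀ lam₀ : ℝ) (hβ : 0 < β) (hlam₀ : 0 < lam₀)
    (hpos : 0 < 2 * β + C₀ * lam₀) {lam : ℝ} (h1 : 0 < lam) (h2 : lam ≤ lam₀) :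
    (∫ τ in lam..lam₀, τ ^ (-(3 : ℝ) / 2) * (2 * β + C₀ * τ) ^ (-(1 : ℝ) / 2))
      = (Real.sqrt ((2*β + C₀*lam)/lam) - Real.sqrt ((2*β + C₀*lam₀)/lam₀)) / β := by
  have key : ∀ τ ∈ Set.uIcc lam lam₀,
      HasDerivAt (fun t => -(Real.sqrt ((2*β + C₀*t)/t) / β))
        (τ ^ (-(3 : ℝ) / 2) * (2 * β + C₀ * τ) ^ (-(1 : ℝ) / 2)) τ := by
    intro τ hτ
    rw [Set.uIcc_of_le h2] at hτ
    have hτ0 : 0 < τ := lt_of_lt_of_le h1 hτ.1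
    have hA : 0 < 2*β + C₀*τ := aux_pos hβ hlam₀ hpos hτ0 hτ.2
    have hu : 0 < (2*β + C₀*τ)/τ := div_pos hA hτ0
    have hd : HasDerivAt (fun t => (2*β + C₀*t)/t)
        ((C₀ * τ - (2*β + C₀*τ) * 1) / τ ^ 2) τ := by
      exact HasDerivAt.div (by simpa using ((hasDerivAt_id τ).const_mul C₀).const_add (2*β))
        (hasDerivAt_id τ) (ne_of_gt hτ0)
    have hs := hd.sqrt (ne_of_gt hu)
    have hG := (hs.div_const β).neg
    have hval : τ ^ (-(3 : ℝ) / 2) * (2 * β + C₀ * τ) ^ (-(1 : ℝ) / 2)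
        = -((C₀ * τ - (2*β + C₀*τ) * 1) / τ ^ 2 / (2*Real.sqrt ((2*β + C₀*τ)/τ)) / β) := by
      have e1 : τ ^ (-(3:ℝ)/2) = 1/(τ * Real.sqrt τ) := by
        rw [show (-(3:ℝ)/2) = -(3/2) by norm_num, Real.rpow_neg hτ0.le,
          show (3/2 : ℝ) = 1 + 1/2 by norm_num, Real.rpow_add hτ0, Real.rpow_one,
          ← Real.sqrt_eq_rpow, one_div]
      have e2 : (2*β+C₀*τ) ^ (-(1:ℝ)/2) = 1/Real.sqrt (2*β+C₀*τ) := by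
        rw [show (-(1:ℝ)/2) = -(1/2) by norm_num, Real.rpow_neg hA.le, ← Real.sqrt_eq_rpow, one_div]
      have e3 : Real.sqrt ((2*β+C₀*τ)/τ) = Real.sqrt (2*β+C₀*τ) / Real.sqrt τ :=
        Real.sqrt_div hA.le τ
      rw [e1, e2, e3]
      have hsA : 0 < Real.sqrt (2*β+C₀*τ) := Real.sqrt_pos.mpr hA
      have hsτ : 0 < Real.sqrt τ := Real.sqrt_pos.mpr hτ0
      have m1 : Real.sqrt τ * Real.sqrt τ = τ := Real.mul_self_sqrt hτ0.le
      have m2 : Real.sqrt (2*β+C₀*τ) * Real.sqrt (2*β+C₀*τ) = 2*β+C₀*τ :=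
        Real.mul_self_sqrt hA.le
      field_simp
      ring_nf
      rw [Real.sq_sqrt hτ0.le]
      ring
    rw [hval]
    exact hG
  have hcont : IntervalIntegrable
      (fun τ => τ ^ (-(3 : ℝ) / 2) * (2 * β + C₀ * τ) ^ (-(1 : ℝ) / 2)) volume lam lam₀ := by
    apply ContinuousOn.intervalIntegrable
    apply ContinuousOn.mul
    · refine ContinuousOn.rpow_const continuousOn_id fun x hx => ?_
      rw [Set.uIcc_of_le h2] at hx
      exact Or.inl (ne_of_gt (lt_of_lt_of_le h1 hx.1))
    · refine ContinuousOn.rpow_const (Continuous.continuousOn (by continuity)) fun x hx => ?_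
      rw [Set.uIcc_of_le h2] at hx
      exact Or.inl (ne_of_gt (aux_pos hβ hlam₀ hpos (lt_of_lt_of_le h1 hx.1) hx.2))
  rw [intervalIntegral.integral_eq_sub_of_hasDerivAt key hcont]
  ring

set_option maxHeartbeats 1000000

/-- Resolution of the scaling parameter from the auxiliary function
`F(λ) = ∫_λ^{λ₀} τ^{−3/2}(2β + C₀τ)^{−1/2} dτ`: `F` is continuous and strictly
decreasing on `(0, λ₀]`, `F(λ₀) = 0`, `F(λ) → +∞` as `λ → 0⁺`; consequently for all
large `s₁` there is a unique `λ₁ ∈ (0, λ₀]` with `F(λ₁) = s₁`, and it satisfies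
`|s₁·√(βλ₁/2) − 1| ≤ C/s₁`. -/
theorem auxiliary_function_resolution (β C₀ lam₀ : ℝ) (hβ : 0 < β)
    (hlam₀ : lam₀ ∈ Set.Ioo (0 : ℝ) 1) (hpos : 0 < 2 * β + C₀ * lam₀) :
    let F : ℝ → ℝ := fun lam =>
      ∫ τ in lam..lam₀, τ ^ (-(3 : ℝ) / 2) * (2 * β + C₀ * τ) ^ (-(1 : ℝ) / 2)
    ContinuousOn F (Set.Ioc 0 lam₀) ∧
    StrictAntiOn F (Set.Ioc 0 lam₀) ∧
    F lam₀ = 0 ∧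
    Tendsto F (nhdsWithin 0 (Set.Ioi 0)) atTop ∧
    ∃ C : ℝ, 0 < C ∧ ∃ S₀ : ℝ, 0 < S₀ ∧ ∀ s₁ : ℝ, S₀ ≤ s₁ →
      (∃! lam₁ : ℝ, lam₁ ∈ Set.Ioc (0 : ℝ) lam₀ ∧ F lam₁ = s₁) ∧
      ∀ lam₁ ∈ Set.Ioc (0 : ℝ) lam₀, F lam₁ = s₁ →
        |s₁ * Real.sqrt (β * lam₁ / 2) - 1| ≤ C / s₁ := by
  obtain ⟨hl0, hl1⟩ := hlam₀
  intro F
  set K : ℝ := Real.sqrt ((2*β + C₀*lam₀)/lam₀) with hK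
  have hK0 : 0 ≤ K := Real.sqrt_nonneg _
  have hKsq : K ^ 2 = (2*β + C₀*lam₀)/lam₀ := Real.sq_sqrt (le_of_lt (div_pos hpos hl0))
  have hKC : K ^ 2 = C₀ + 2*β/lam₀ := by rw [hKsq]; field_simp; ring
  have hF : ∀ lam ∈ Set.Ioc (0:ℝ) lam₀,
      F lam = (Real.sqrt ((2*β + C₀*lam)/lam) - K) / β := fun lam hl =>
    F_formula β C₀ lam₀ hβ hl0 hpos hl.1 hl.2
  have harg_pos : ∀ lam ∈ Set.Ioc (0:ℝ) lam₀, 0 < (2*β + C₀*lam)/lam := fun lam hl =>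
    div_pos (aux_pos hβ hl0 hpos hl.1 hl.2) hl.1
  -- 1. continuity
  have hcont : ContinuousOn F (Set.Ioc 0 lam₀) := by
    apply ContinuousOn.congr (f := fun lam => (Real.sqrt ((2*β + C₀*lam)/lam) - K) / β)
      ?_ (fun lam hl => hF lam hl)
    apply ContinuousOn.div_const
    apply ContinuousOn.sub ?_ continuousOn_const
    apply ContinuousOn.sqrt
    exact ContinuousOn.div (Continuous.continuousOn (by continuity)) continuousOn_id
      (fun x hx => ne_of_gt hx.1)
  -- 2. strict antitone
  have hanti : StrictAntiOn F (Set.Ioc 0 lam₀) := by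
    intro a ha b hb hab
    rw [hF a ha, hF b hb]
    have hlt : (2*β + C₀*b)/b < (2*β + C₀*a)/a := by
      rw [div_lt_div_iff₀ hb.1 ha.1]; nlinarith
    have hs := Real.sqrt_lt_sqrt (le_of_lt (harg_pos b hb)) hlt
    gcongr
  -- 3. F lam₀ = 0
  have hF0 : F lam₀ = 0 := intervalIntegral.integral_same
  -- 4. tendsto atTop
  have htend : Tendsto F (nhdsWithin 0 (Set.Ioi 0)) atTop := by
    have hmem : Set.Ioc (0:ℝ) lam₀ ∈ nhdsWithin (0:ℝ) (Set.Ioi 0) := Ioc_mem_nhdsGT hl0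
    have heq : (fun lam => (Real.sqrt ((2*β + C₀*lam)/lam) - K) / β)
        =ᶠ[nhdsWithin (0:ℝ) (Set.Ioi 0)] F := by
      filter_upwards [hmem] with lam hl using (hF lam hl).symm
    refine Tendsto.congr' heq ?_
    have t1 : Tendsto (fun lam : ℝ => (2*β + C₀*lam)/lam) (nhdsWithin (0:ℝ) (Set.Ioi 0)) atTop := by
      have t0 : Tendsto (fun lam : ℝ => 2*β * lam⁻¹ + C₀) (nhdsWithin (0:ℝ) (Set.Ioi 0)) atTop :=
        tendsto_atTop_add_const_right _ C₀
          ((tendsto_const_mul_atTop_of_pos (by linarith)).mpr tendsto_inv_nhdsGT_zero)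
      refine t0.congr' ?_
      filter_upwards [self_mem_nhdsWithin] with lam (hl : (0:ℝ) < lam)
      field_simp
    have tsq : Tendsto Real.sqrt atTop atTop := by
      refine (tendsto_rpow_atTop (y := 1/2) (by norm_num)).congr fun x => ?_
      exact (Real.sqrt_eq_rpow x).symm
    have t2 := tendsto_atTop_add_const_right _ (-K) (tsq.comp t1)
    have t3 := t2.atTop_div_const hβ
    refine t3.congr fun lam => ?_
    simp [Function.comp, sub_eq_add_neg]
  have hCpos : 0 < 2*K/β + 2/(β*lam₀) + 1 := by
    have h1 : 0 ≤ 2*K/β := div_nonneg (by linarith) hβ.le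
    have h2 : 0 < 2/(β*lam₀) := div_pos two_pos (mul_pos hβ hl0)
    linarith
  refine ⟨hcont, hanti, hF0, htend, 2*K/β + 2/(β*lam₀) + 1, hCpos, 1, one_pos, ?_⟩
  intro s₁ hs₁
  have hs₁0 : 0 < s₁ := lt_of_lt_of_le one_pos hs₁
  set D : ℝ := β^2*s₁^2 + 2*β*s₁*K + 2*β/lam₀ with hDdef
  have ha1 : 0 ≤ 2*β*s₁*K := by
    have := mul_nonneg (mul_nonneg (by linarith : (0:ℝ) ≤ 2*β) hs₁0.le) hK0
    linarith [this]
  have ha2 : 0 < 2*β/lam₀ := div_pos (by linarith) hl0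
  have ha3 : 0 ≤ β^2*s₁^2 := by positivity
  have hD : 0 < D := by rw [hDdef]; linarith
  have hDge : 2*β/lam₀ ≤ D := by rw [hDdef]; linarith
  have hD2 : β^2*s₁^2 ≤ D := by rw [hDdef]; linarith
  have hβs : 0 ≤ β*s₁ + K := by nlinarith [mul_pos hβ hs₁0]
  have hBK : (β*s₁ + K)^2 = D + C₀ := by rw [hDdef]; linear_combination hKC
  have hlamD : 2*β ≤ lam₀ * D := by
    have hdiv : lam₀ * (2*β/lam₀) = 2*β := by field_simp
    rw [hDdef]
    nlinarith [mul_nonneg hl0.le ha1, mul_nonneg hl0.le ha3]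
  -- characterization
  have hchar : ∀ lam ∈ Set.Ioc (0:ℝ) lam₀, F lam = s₁ → lam * D = 2*β := by
    intro lam hl hFl
    rw [hF lam hl] at hFl
    have hsqrt : Real.sqrt ((2*β + C₀*lam)/lam) = β*s₁ + K := by
      field_simp at hFl; linarith
    have hsq : (2*β + C₀*lam)/lam = (β*s₁ + K)^2 := by
      rw [← hsqrt, Real.sq_sqrt (le_of_lt (harg_pos lam hl))]
    rw [div_eq_iff (ne_of_gt hl.1), hBK] at hsq
    linear_combination -hsq
  have hmemD : (2*β/D) ∈ Set.Ioc (0:ℝ) lam₀ := by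
    refine ⟨div_pos (by linarith) hD, ?_⟩
    rw [div_le_iff₀ hD]
    linarith [hlamD]
  constructor
  · -- existence and uniqueness
    refine ⟨2*β/D, ⟨hmemD, ?_⟩, ?_⟩
    · rw [hF _ hmemD]
      have hD' : D ≠ 0 := ne_of_gt hD
      have hβ2 : (2*β) ≠ 0 := by linarith
      have harg : (2*β + C₀*(2*β/D))/(2*β/D) = (β*s₁ + K)^2 := by
        rw [hBK]; field_simp
      rw [harg, Real.sqrt_sq hβs]
      field_simp
      ring
    · rintro lam' ⟨hmem', hF'⟩
      have h1 := hchar lam' hmem' hF'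
      rw [eq_div_iff (ne_of_gt hD)]
      linarith
  · -- the bound
    intro lam₁ hmem₁ hF₁
    have hld := hchar lam₁ hmem₁ hF₁
    set x : ℝ := s₁ * Real.sqrt (β * lam₁ / 2) with hxdef
    have hx0 : 0 ≤ x := mul_nonneg hs₁0.le (Real.sqrt_nonneg _)
    have hx2 : x^2 * D = β^2 * s₁^2 := by
      rw [hxdef, mul_pow,
        Real.sq_sqrt (div_nonneg (mul_pos hβ hmem₁.1).le (by norm_num) : (0:ℝ) ≤ β * lam₁ / 2)]
      linear_combination (s₁^2 * β/2) * hld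
    have hx21 : x^2 ≤ 1 := by nlinarith
    have hx1 : x ≤ 1 := by nlinarith
    rw [abs_of_nonpos (by linarith)]
    have step1 : 1 - x ≤ 1 - x^2 := by nlinarith
    have hE : 0 ≤ 2*β*s₁*K + 2*β/lam₀ := by linarith
    have e2' : 1 - x^2 = (2*β*s₁*K + 2*β/lam₀)/D := by
      rw [eq_div_iff (ne_of_gt hD)]
      linear_combination hDdef - hx2
    have hs₁sq : s₁ ≤ s₁^2 := by nlinarith
    have step3 : (2*β*s₁*K + 2*β/lam₀)/D ≤ (2*K/β + 2/(β*lam₀) + 1)/s₁ := by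
      rw [div_le_div_iff₀ hD hs₁0]
      have hCexp : (2*K/β + 2/(β*lam₀) + 1)*(β^2*s₁^2)
          = 2*β*K*s₁^2 + (2*β/lam₀)*s₁^2 + β^2*s₁^2 := by field_simp
      have t2 : (2*β/lam₀)*s₁ ≤ (2*β/lam₀)*s₁^2 := mul_le_mul_of_nonneg_left hs₁sq ha2.le
      have t3 : (2*K/β + 2/(β*lam₀) + 1)*(β^2*s₁^2) ≤ (2*K/β + 2/(β*lam₀) + 1)*D :=
        mul_le_mul_of_nonneg_left hD2 hCpos.le
      calc (2*β*s₁*K + 2*β/lam₀)*s₁ = 2*β*K*s₁^2 + (2*β/lam₀)*s₁ := by ring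
        _ ≤ 2*β*K*s₁^2 + (2*β/lam₀)*s₁^2 + β^2*s₁^2 := by linarith
        _ = (2*K/β + 2/(β*lam₀) + 1)*(β^2*s₁^2) := hCexp.symm
        _ ≤ (2*K/β + 2/(β*lam₀) + 1)*D := t3
    linarith [e2' ▸ step1, step3]
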